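/- arXiv:2205.00842 — 5 statements merged into one kernel-verified Lean document; each statement's English description precedes it below -/
import Mathlib

section
/- In a strict monoidal category 𝔸, the composition of optics defined by ⟨α ∣ β⟩_M ∘ ⟨γ ∣ δ⟩_N = ⟨α(1_M ⊗ γ) ∣ (1_M ⊗ δ)β⟩_{M⊗N} is associative: for optics ⟨α∣β⟩_M : (A,B) → (C,D), ⟨γ∣δ⟩_N : (C,D) → (E,F), ⟨ε∣ζ⟩_P : (E,F) → (G,H), composing the first two then the third gives the same optic as composing the first with the composite of the last two. -/
open CategoryTheory MonoidalCategory

universe v u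

variable (C : Type u) [Category.{v} C] [MonoidalCategory C]

/-- A representative of an optic `(A,B) → (X,Y)`: a residual `M`,
a forward part `A ⟶ M ⊗ X` and a backward part `M ⊗ Y ⟶ B`. -/
structure OpticRep (A B X Y : C) where
  M : C
  fwd : A ⟶ M ⊗ X
  bwd : M ⊗ Y ⟶ B

variable {C}

/-- The sliding relation generating the equivalence on optic representatives. -/
inductive OpticRel (A B X Y : C) : OpticRep C A B X Y → OpticRep C A B X Y → Prop
  | slide {M N : C} (f : M ⟶ N) (a : A ⟶ M ⊗ X) (b : N ⊗ Y ⟶ B) :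
      OpticRel A B X Y ⟨N, a ≫ (f ▷ X), b⟩ ⟨M, a, (f ▷ Y) ≫ b⟩

/-- An optic is an equivalence class of representatives. -/
def Optic (A B X Y : C) := Quot (OpticRel A B X Y)

/-- Composition of optic representatives. -/
def OpticRep.comp {A B X Y E F : C} (h : OpticRep C A B X Y) (k : OpticRep C X Y E F) :
    OpticRep C A B E F where
  M := h.M ⊗ k.M
  fwd := h.fwd ≫ (h.M ◁ k.fwd) ≫ (α_ h.M k.M E).inv
  bwd := (α_ h.M k.M F).hom ≫ (h.M ◁ k.bwd) ≫ h.bwd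

/-- The identity optic representative `⟨1_A ∣ 1_B⟩_I`. -/
def OpticRep.id (A B : C) : OpticRep C A B A B where
  M := 𝟙_ C
  fwd := (λ_ A).inv
  bwd := (λ_ B).hom

/-- Composition of optics is associative. -/
theorem optic_comp_assoc {A B X Y E F G H : C}
    (h : OpticRep C A B X Y) (k : OpticRep C X Y E F) (l : OpticRep C E F G H) :
    Quot.mk (OpticRel A B G H) ((h.comp k).comp l) =
      Quot.mk (OpticRel A B G H) (h.comp (k.comp l)) := by
  have e1 : ((h.comp k).comp l).fwd =
      (h.comp (k.comp l)).fwd ≫ ((α_ h.M k.M l.M).inv ▷ G) := by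
    simp [OpticRep.comp, whisker_exchange]
  have e2 : (h.comp (k.comp l)).bwd =
      ((α_ h.M k.M l.M).inv ▷ H) ≫ ((h.comp k).comp l).bwd := by
    simp [OpticRep.comp, whisker_exchange]
  have key := Quot.sound (OpticRel.slide (A := A) (B := B) (X := G) (Y := H)
    (α_ h.M k.M l.M).inv (h.comp (k.comp l)).fwd ((h.comp k).comp l).bwd)
  have hl : (h.comp k).comp l =
      ⟨(h.M ⊗ k.M) ⊗ l.M, (h.comp (k.comp l)).fwd ≫ ((α_ h.M k.M l.M).inv ▷ G),
        ((h.comp k).comp l).bwd⟩ := by rw [← e1]; rfl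
  have hr : h.comp (k.comp l) =
      ⟨h.M ⊗ (k.M ⊗ l.M), (h.comp (k.comp l)).fwd,
        ((α_ h.M k.M l.M).inv ▷ H) ≫ ((h.comp k).comp l).bwd⟩ := by rw [← e2]; rfl
  rw [hl]
  exact key.trans (congrArg _ hr.symm)
end

section
/- For a strict monoidal category 𝔸, the data of objects (A,B) for pairs of objects of 𝔸, morphisms given by optics, composition ⟨α∣β⟩_M ∘ ⟨γ∣δ⟩_N = ⟨α(1_M ⊗ γ) ∣ (1_M ⊗ δ)β⟩_{M⊗N}, and identities ⟨1_A ∣ 1_B⟩_I forms a category Optic_𝔸. -/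
open CategoryTheory MonoidalCategory

universe v u

variable (C : Type u) [Category.{v} C] [MonoidalCategory C]

variable {C}

lemma OpticRep.mk_congr {A B X Y : C} (M : C) {f₁ f₂ : A ⟶ M ⊗ X} {b₁ b₂ : M ⊗ Y ⟶ B}
    (hf : f₁ = f₂) (hb : b₁ = b₂) :
    (OpticRep.mk M f₁ b₁ : OpticRep C A B X Y) = OpticRep.mk M f₂ b₂ := by
  subst hf; subst hb; rfl

lemma optic_slide {A B X Y : C} {M N : C} (f : M ⟶ N) (a : A ⟶ M ⊗ X) (b : N ⊗ Y ⟶ B)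
    (r s : OpticRep C A B X Y)
    (hr : r = ⟨N, a ≫ (f ▷ X), b⟩) (hs : s = ⟨M, a, (f ▷ Y) ≫ b⟩) :
    Quot.mk (OpticRel A B X Y) r = Quot.mk (OpticRel A B X Y) s := by
  subst hr; subst hs; exact Quot.sound (OpticRel.slide f a b)

/-- Optics form a category: composition is well defined on equivalence classes,
`⟨1∣1⟩_I` is a two-sided identity, and composition is associative. -/
theorem optic_forms_category :
    (∀ (A B X Y E F : C) (h h' : OpticRep C A B X Y) (k : OpticRep C X Y E F),
        OpticRel A B X Y h h' →
        Quot.mk (OpticRel A B E F) (h.comp k) = Quot.mk (OpticRel A B E F) (h'.comp k)) ∧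
    (∀ (A B X Y E F : C) (h : OpticRep C A B X Y) (k k' : OpticRep C X Y E F),
        OpticRel X Y E F k k' →
        Quot.mk (OpticRel A B E F) (h.comp k) = Quot.mk (OpticRel A B E F) (h.comp k')) ∧
    (∀ (A B X Y : C) (h : OpticRep C A B X Y),
        Quot.mk (OpticRel A B X Y) ((OpticRep.id A B).comp h) = Quot.mk (OpticRel A B X Y) h) ∧
    (∀ (A B X Y : C) (h : OpticRep C A B X Y),
        Quot.mk (OpticRel A B X Y) (h.comp (OpticRep.id X Y)) = Quot.mk (OpticRel A B X Y) h) ∧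
    (∀ (A B X Y E F G H : C) (h : OpticRep C A B X Y) (k : OpticRep C X Y E F)
        (l : OpticRep C E F G H),
        Quot.mk (OpticRel A B G H) ((h.comp k).comp l) =
          Quot.mk (OpticRel A B G H) (h.comp (k.comp l))) := by
  refine ⟨?_, ?_, ?_, ?_, ?_⟩
  · rintro A B X Y E F h h' k ⟨f, a, b⟩
    refine optic_slide (f ▷ k.M)
      (a ≫ (_ ◁ k.fwd) ≫ (α_ _ k.M E).inv)
      ((α_ _ k.M F).hom ≫ (_ ◁ k.bwd) ≫ b) _ _
      (OpticRep.mk_congr _ ?_ ?_) (OpticRep.mk_congr _ ?_ ?_)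
    · show (a ≫ f ▷ X) ≫ _ ◁ k.fwd ≫ (α_ _ k.M E).inv = _
      rw [Category.assoc, ← whisker_exchange_assoc, associator_inv_naturality_left]; simp
    · rfl
    · rfl
    · show (α_ _ k.M F).hom ≫ _ ◁ k.bwd ≫ f ▷ Y ≫ b = _
      rw [whisker_exchange_assoc, ← associator_naturality_left_assoc]
  · rintro A B X Y E F h k k' ⟨f, a, b⟩
    refine optic_slide (h.M ◁ f)
      (h.fwd ≫ (h.M ◁ a) ≫ (α_ h.M _ E).inv)
      ((α_ h.M _ F).hom ≫ (h.M ◁ b) ≫ h.bwd) _ _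
      (OpticRep.mk_congr _ ?_ ?_) (OpticRep.mk_congr _ ?_ ?_) <;>
      simp [OpticRep.comp]
  · intro A B X Y h
    refine optic_slide (λ_ h.M).inv h.fwd
      ((α_ (𝟙_ C) h.M Y).hom ≫ ((𝟙_ C) ◁ h.bwd) ≫ (λ_ B).hom) _ _
      (OpticRep.mk_congr _ ?_ ?_) (OpticRep.mk_congr _ ?_ ?_) <;>
      simp [OpticRep.comp, OpticRep.id, whisker_exchange]
  · intro A B X Y h
    refine optic_slide (ρ_ h.M).inv h.fwd
      ((α_ h.M (𝟙_ C) Y).hom ≫ (h.M ◁ (λ_ Y).hom) ≫ h.bwd) _ _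
      (OpticRep.mk_congr _ ?_ ?_) (OpticRep.mk_congr _ ?_ ?_) <;>
      simp [OpticRep.comp, OpticRep.id]
  · intro A B X Y E F G H h k l
    refine optic_slide (α_ h.M k.M l.M).inv
      ((h.comp (k.comp l)).fwd) (((h.comp k).comp l).bwd) _ _
      (OpticRep.mk_congr _ ?_ ?_) (OpticRep.mk_congr _ ?_ ?_) <;>
      simp [OpticRep.comp, whisker_exchange]
end

section
/- Let 𝔸 be a strict monoidal category. The assignment B ↦ (I, B) on objects and f : A → B ↦ ⟨1_I ∣ f⟩_I : (I,B) → (I,A) defines a fully faithful functor 𝔸^op → Optic_𝔸 (where ⟨1_I ∣ f⟩_I has forward part 1_I : I → I ⊗ I and backward part f : I ⊗ A → B): it sends identities to identities, reverses composition, and is injective and surjective on hom-sets onto Optic_𝔸((I,B),(I,A)). -/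
open CategoryTheory MonoidalCategory

universe v u

variable (C : Type u) [Category.{v} C] [MonoidalCategory C]

variable {C}

variable (C) in
/-- The contravariant embedding `f : A ⟶ B  ↦  ⟨1_I ∣ f⟩_I : (I,B) → (I,A)`. -/
def coembedRep {A B : C} (f : A ⟶ B) : OpticRep C (𝟙_ C) B (𝟙_ C) A :=
  ⟨𝟙_ C, (λ_ (𝟙_ C)).inv, (λ_ A).hom ≫ f⟩

/-- Extract a morphism `A ⟶ B` from a representative of an optic `(I,B) → (I,A)`. -/
def opticExtract {A B : C} (r : OpticRep C (𝟙_ C) B (𝟙_ C) A) : A ⟶ B :=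
  (λ_ A).inv ≫ ((r.fwd ≫ (ρ_ r.M).hom) ▷ A) ≫ r.bwd

lemma opticExtract_invariant {A B : C} (r s : OpticRep C (𝟙_ C) B (𝟙_ C) A)
    (h : OpticRel (𝟙_ C) B (𝟙_ C) A r s) : opticExtract r = opticExtract s := by
  cases h with
  | slide f a b =>
    simp only [opticExtract, Category.assoc]
    congr 1
    simp [MonoidalCategory.comp_whiskerRight, MonoidalCategory.whiskerRight_id]

lemma opticExtract_coembed {A B : C} (f : A ⟶ B) : opticExtract (coembedRep C f) = f := by
  simp [opticExtract, coembedRep, MonoidalCategory.comp_whiskerRight,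
    MonoidalCategory.whiskerRight_id]

lemma optic_normal_form {A B : C} (r : OpticRep C (𝟙_ C) B (𝟙_ C) A) :
    Quot.mk (OpticRel (𝟙_ C) B (𝟙_ C) A) r =
      Quot.mk (OpticRel (𝟙_ C) B (𝟙_ C) A) (coembedRep C (opticExtract r)) := by
  obtain ⟨M, fwd, bwd⟩ := r
  have key : fwd = (λ_ (𝟙_ C)).inv ≫ ((fwd ≫ (ρ_ M).hom) ▷ (𝟙_ C)) := by
    rw [MonoidalCategory.whiskerRight_id, ← unitors_equal]
    simp
  have := Quot.sound (OpticRel.slide (fwd ≫ (ρ_ M).hom) (λ_ (𝟙_ C)).inv bwd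
    (A := 𝟙_ C) (B := B) (X := 𝟙_ C) (Y := A))
  calc Quot.mk _ (⟨M, fwd, bwd⟩ : OpticRep C (𝟙_ C) B (𝟙_ C) A)
      = Quot.mk _ ⟨M, (λ_ (𝟙_ C)).inv ≫ ((fwd ≫ (ρ_ M).hom) ▷ (𝟙_ C)), bwd⟩ := by rw [← key]
    _ = Quot.mk _ ⟨𝟙_ C, (λ_ (𝟙_ C)).inv, ((fwd ≫ (ρ_ M).hom) ▷ A) ≫ bwd⟩ := this
    _ = _ := by
        simp [coembedRep, opticExtract]

/-- The assignment `B ↦ (I,B)`, `f ↦ ⟨1_I ∣ f⟩_I` is a fully faithful functor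
`𝔸ᵒᵖ → Optic_𝔸`. -/
theorem coembed_fully_faithful_contravariant_functor :
    (∀ A : C, Quot.mk (OpticRel (𝟙_ C) A (𝟙_ C) A) (coembedRep C (𝟙 A)) =
        Quot.mk (OpticRel (𝟙_ C) A (𝟙_ C) A) (OpticRep.id (𝟙_ C) A)) ∧
    (∀ (A B D : C) (f : A ⟶ B) (g : B ⟶ D),
        Quot.mk (OpticRel (𝟙_ C) D (𝟙_ C) A) (coembedRep C (f ≫ g)) =
          Quot.mk (OpticRel (𝟙_ C) D (𝟙_ C) A) ((coembedRep C g).comp (coembedRep C f))) ∧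
    (∀ (A B : C) (f g : A ⟶ B),
        Quot.mk (OpticRel (𝟙_ C) B (𝟙_ C) A) (coembedRep C f) =
          Quot.mk (OpticRel (𝟙_ C) B (𝟙_ C) A) (coembedRep C g) → f = g) ∧
    (∀ (A B : C) (o : Optic (𝟙_ C) B (𝟙_ C) A),
        ∃ f : A ⟶ B, o = Quot.mk (OpticRel (𝟙_ C) B (𝟙_ C) A) (coembedRep C f)) := by
  refine ⟨?_, ?_, ?_, ?_⟩
  · intro A
    have h1 : opticExtract (OpticRep.id (𝟙_ C) A) = 𝟙 A := by
      simp [opticExtract, OpticRep.id, MonoidalCategory.whiskerRight_id, ← unitors_equal]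
    rw [optic_normal_form (OpticRep.id (𝟙_ C) A), h1]
  · intro A B D f g
    rw [optic_normal_form ((coembedRep C g).comp (coembedRep C f))]
    congr 1
    rw [opticExtract]
    simp [OpticRep.comp, coembedRep, opticExtract, MonoidalCategory.whiskerRight_id,
      MonoidalCategory.id_whiskerLeft, ← unitors_equal, MonoidalCategory.comp_whiskerRight]
    coherence
  · intro A B f g h
    have := congrArg (Quot.lift opticExtract opticExtract_invariant) h
    simpa [opticExtract_coembed] using this
  · intro A B o
    obtain ⟨r, rfl⟩ := Quot.exists_rep o
    exact ⟨opticExtract r, optic_normal_form r⟩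
end

section
/- Let 𝔸 be a strict monoidal category. Then every optic (A, I) → (B, I) in Optic_𝔸 is of the form ⟨f ∣ 1_I⟩_I for a unique f : A → B of 𝔸; equivalently Optic_𝔸((A,I),(B,I)) ≅ 𝔸(A,B). -/
open CategoryTheory MonoidalCategory

universe v u

variable (C : Type u) [Category.{v} C] [MonoidalCategory C]

variable {C}

variable (C) in
/-- The embedding `f : A ⟶ B  ↦  ⟨f ∣ 1_I⟩_I : (A,I) → (B,I)`. -/
def embedRep {A B : C} (f : A ⟶ B) : OpticRep C A (𝟙_ C) B (𝟙_ C) :=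
  ⟨𝟙_ C, f ≫ (λ_ B).inv, (λ_ (𝟙_ C)).hom⟩


/-- Extract the underlying morphism from a representative. -/
def extractRep {A B : C} (r : OpticRep C A (𝟙_ C) B (𝟙_ C)) : A ⟶ B :=
  r.fwd ≫ (((ρ_ r.M).inv ≫ r.bwd) ▷ B) ≫ (λ_ B).hom

lemma extractRep_rel {A B : C} {r s : OpticRep C A (𝟙_ C) B (𝟙_ C)}
    (h : OpticRel A (𝟙_ C) B (𝟙_ C) r s) : extractRep r = extractRep s := by
  cases h with
  | slide f a b =>
    simp only [extractRep, Category.assoc, ← comp_whiskerRight]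
    rw [← rightUnitor_inv_naturality_assoc]
    simp [comp_whiskerRight]

lemma extractRep_embed {A B : C} (f : A ⟶ B) : extractRep (embedRep C f) = f := by
  simp [extractRep, embedRep, unitors_inv_equal]

lemma embed_extract {A B : C} (r : OpticRep C A (𝟙_ C) B (𝟙_ C)) :
    Quot.mk (OpticRel A (𝟙_ C) B (𝟙_ C)) r
      = Quot.mk (OpticRel A (𝟙_ C) B (𝟙_ C)) (embedRep C (extractRep r)) := by
  have h := OpticRel.slide (A := A) (X := B) ((ρ_ r.M).inv ≫ r.bwd) r.fwd (λ_ (𝟙_ C)).hom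
  have e1 : (⟨𝟙_ C, r.fwd ≫ (((ρ_ r.M).inv ≫ r.bwd) ▷ B), (λ_ (𝟙_ C)).hom⟩ :
      OpticRep C A (𝟙_ C) B (𝟙_ C)) = embedRep C (extractRep r) := by
    simp [embedRep, extractRep]
  have e2 : (⟨r.M, r.fwd, (((ρ_ r.M).inv ≫ r.bwd) ▷ (𝟙_ C)) ≫ (λ_ (𝟙_ C)).hom⟩ :
      OpticRep C A (𝟙_ C) B (𝟙_ C)) = r := by
    rw [unitors_equal, comp_whiskerRight, Category.assoc,
      rightUnitor_naturality, ← Category.assoc, rightUnitor_naturality]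
    simp
  rw [e1, e2] at h
  exact (Quot.sound h).symm

/-- Every optic `(A,I) → (B,I)` is `⟨f ∣ 1_I⟩_I` for a unique `f : A ⟶ B`;
equivalently `Optic_𝔸((A,I),(B,I)) ≅ 𝔸(A,B)`. -/
theorem optic_to_unit_pair_unique_rep {A B : C} (o : Optic A (𝟙_ C) B (𝟙_ C)) :
    ∃! f : A ⟶ B, o = Quot.mk (OpticRel A (𝟙_ C) B (𝟙_ C)) (embedRep C f) := by
  induction o using Quot.ind with
  | _ r =>
    refine ⟨extractRep r, embed_extract r, ?_⟩
    intro f hf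
    have := congrArg (Quot.lift extractRep (fun _ _ h => extractRep_rel h)) hf
    simpa [extractRep_embed] using this.symm
end

section
/- Let 𝔸 be a strict monoidal category. The operation of inserting a 1-comb (an optic) into the gap of another optic is well-defined and recovers optic composition: given optics h = ⟨α ∣ β⟩_M : (A,B) → (C,D) and k = ⟨γ ∣ δ⟩_N : (C,D) → (E,F), inserting k into the gap of h yields the optic ⟨α(1_M ⊗ γ) ∣ (1_M ⊗ δ)β⟩_{M⊗N} : (A,B) → (E,F), and this is independent of the chosen representatives of h and k. -/
open CategoryTheory MonoidalCategory

universe v u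

variable (C : Type u) [Category.{v} C] [MonoidalCategory C]

variable {C}

lemma optic_comp_left {A B X Y E F : C} {h₁ h₂ : OpticRep C A B X Y}
    (k : OpticRep C X Y E F) (r : OpticRel A B X Y h₁ h₂) :
    Quot.mk (OpticRel A B E F) (h₁.comp k) = Quot.mk (OpticRel A B E F) (h₂.comp k) := by
  obtain ⟨f, a, b⟩ := r
  apply Quot.sound
  have e1 : OpticRep.comp ⟨_, a ≫ f ▷ X, b⟩ k =
      ⟨_, (a ≫ (_ ◁ k.fwd) ≫ (α_ _ _ _).inv) ≫ ((f ▷ k.M) ▷ E),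
        (α_ _ _ _).hom ≫ (_ ◁ k.bwd) ≫ b⟩ := by
    simp only [OpticRep.comp, OpticRep.mk.injEq, heq_eq_eq, true_and, and_true]
    rw [Category.assoc, ← Category.assoc (f ▷ X), ← whisker_exchange]
    simp
  have e2 : OpticRep.comp ⟨_, a, f ▷ Y ≫ b⟩ k =
      ⟨_, a ≫ (_ ◁ k.fwd) ≫ (α_ _ _ _).inv,
        ((f ▷ k.M) ▷ F) ≫ (α_ _ _ _).hom ≫ (_ ◁ k.bwd) ≫ b⟩ := by
    simp only [OpticRep.comp, OpticRep.mk.injEq, heq_eq_eq, true_and, and_true]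
    rw [← Category.assoc (_ ◁ k.bwd), whisker_exchange]
    simp
  rw [e1, e2]
  exact OpticRel.slide _ _ _

lemma optic_comp_right {A B X Y E F : C} (h : OpticRep C A B X Y)
    {k₁ k₂ : OpticRep C X Y E F} (r : OpticRel X Y E F k₁ k₂) :
    Quot.mk (OpticRel A B E F) (h.comp k₁) = Quot.mk (OpticRel A B E F) (h.comp k₂) := by
  obtain ⟨f, a, b⟩ := r
  apply Quot.sound
  have e1 : OpticRep.comp h ⟨_, a ≫ f ▷ E, b⟩ =
      ⟨_, (h.fwd ≫ (h.M ◁ a) ≫ (α_ _ _ _).inv) ≫ ((h.M ◁ f) ▷ E),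
        (α_ _ _ _).hom ≫ (h.M ◁ b) ≫ h.bwd⟩ := by
    simp [OpticRep.comp]
  have e2 : OpticRep.comp h ⟨_, a, f ▷ F ≫ b⟩ =
      ⟨_, h.fwd ≫ (h.M ◁ a) ≫ (α_ _ _ _).inv,
        ((h.M ◁ f) ▷ F) ≫ (α_ _ _ _).hom ≫ (h.M ◁ b) ≫ h.bwd⟩ := by
    simp [OpticRep.comp]
  rw [e1, e2]
  exact OpticRel.slide _ _ _

lemma optic_comp_left_eqv {A B X Y E F : C} {h₁ h₂ : OpticRep C A B X Y}
    (k : OpticRep C X Y E F) (r : Relation.EqvGen (OpticRel A B X Y) h₁ h₂) :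
    Quot.mk (OpticRel A B E F) (h₁.comp k) = Quot.mk (OpticRel A B E F) (h₂.comp k) := by
  induction r with
  | rel x y r => exact optic_comp_left k r
  | refl x => rfl
  | symm x y _ ih => exact ih.symm
  | trans x y z _ _ ih₁ ih₂ => exact ih₁.trans ih₂

lemma optic_comp_right_eqv {A B X Y E F : C} (h : OpticRep C A B X Y)
    {k₁ k₂ : OpticRep C X Y E F} (r : Relation.EqvGen (OpticRel X Y E F) k₁ k₂) :
    Quot.mk (OpticRel A B E F) (h.comp k₁) = Quot.mk (OpticRel A B E F) (h.comp k₂) := by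
  induction r with
  | rel x y r => exact optic_comp_right h r
  | refl x => rfl
  | symm x y _ ih => exact ih.symm
  | trans x y z _ _ ih₁ ih₂ => exact ih₁.trans ih₂

/-- Inserting an optic into the gap of another optic (i.e. optic composition
`⟨α(1_M ⊗ γ) ∣ (1_M ⊗ δ)β⟩_{M⊗N}`) is independent of the chosen representatives. -/
theorem optic_insertion_well_defined {A B X Y E F : C}
    (h h' : OpticRep C A B X Y) (k k' : OpticRep C X Y E F)
    (hh : Quot.mk (OpticRel A B X Y) h = Quot.mk (OpticRel A B X Y) h')
    (hk : Quot.mk (OpticRel X Y E F) k = Quot.mk (OpticRel X Y E F) k') :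
    Quot.mk (OpticRel A B E F) (h.comp k) = Quot.mk (OpticRel A B E F) (h'.comp k') := by
  rw [Quot.eq] at hh hk
  exact (optic_comp_left_eqv k hh).trans (optic_comp_right_eqv h' hk)
end
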